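/- arXiv:math/9804102 — 4 statements merged into one kernel-verified Lean document; each statement's English description precedes it below -/
import Mathlib

section
/- (Theorem 7, upper estimate.) Let n ≥ 1 and let D⁰ = {z ∈ ℂⁿ : |z₁| + … + |z_n| < 1}. For every real r with 1/3 < r < 1 there exists a power series Σ_α c_α z^α converging at every point of D⁰ with |Σ_α c_α z^α| < 1 on D⁰, such that Σ_α |c_α| · (α₁!···α_n!·(n−1)!/(|α|+n−1)!) · r^{|α|} ≥ 1. Hence L_n(D⁰) ≤ 1/3. -/
/-!
Take `f z = φ (z₁ + ⋯ + zₙ)` with `φ w = (a - w) / (1 - a w)` and `a = (1 - r) / (2 r) ∈ (0, 1)`.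
On `D⁰` we have `|z₁ + ⋯ + zₙ| < 1`, so `|f| < 1`. The coefficient of `z ^ α` is `b_{|α|}`
times a multinomial coefficient, `b_k` being the Taylor coefficients of `φ`. On the fibre
`|α| = k` the multinomial coefficient times the `L¹`-weight is `1 / C(n + k - 1, k)`, and the fibre
has `C(n + k - 1, k)` elements, so the Bohr sum collapses to
`∑ₖ |b_k| rᵏ = 2a - (a - r) / (1 - a r)`, which equals `1` for this `a`.
-/

open Finset

section Fibers

variable {ι : Type*} [Fintype ι] [DecidableEq ι]

lemma degree_preimage_eq_piAntidiag (k : ℕ) :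
    (fun α : ι → ℕ => ∑ j, α j) ⁻¹' {k} = ((univ.piAntidiag k : Finset (ι → ℕ)) : Set (ι → ℕ)) := by
  ext α
  simp [mem_piAntidiag]

lemma finite_degree_preimage (k : ℕ) : ((fun α : ι → ℕ => ∑ j, α j) ⁻¹' {k}).Finite := by
  rw [degree_preimage_eq_piAntidiag]
  exact finite_toSet _

lemma tsum_degree_fiber {M : Type*} [AddCommMonoid M] [TopologicalSpace M]
    (f : (ι → ℕ) → M) (k : ℕ) :
    ∑' α : (fun α : ι → ℕ => ∑ j, α j) ⁻¹' {k}, f α = ∑ α ∈ univ.piAntidiag k, f α := by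
  rw [degree_preimage_eq_piAntidiag, Finset.tsum_subtype']

lemma HasSum.sum_piAntidiag {M : Type*} [AddCommMonoid M] [TopologicalSpace M]
    [ContinuousAdd M] [RegularSpace M] {f : (ι → ℕ) → M} {a : M} (hf : HasSum f a) :
    HasSum (fun k => ∑ α ∈ univ.piAntidiag k, f α) a := by
  refine ((Equiv.sigmaFiberEquiv fun α : ι → ℕ => ∑ j, α j).hasSum_iff.mpr hf).sigma fun k => ?_
  rw [← tsum_degree_fiber]
  exact ((finite_degree_preimage k).summable f).hasSum

lemma summable_iff_summable_sum_piAntidiag {f : (ι → ℕ) → ℝ} (hf : 0 ≤ f) :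
    Summable f ↔ Summable fun k => ∑ α ∈ univ.piAntidiag k, f α := by
  have hpart : ∀ α : ι → ℕ, ∃! k, α ∈ (fun α : ι → ℕ => ∑ j, α j) ⁻¹' {k} :=
    fun α => ⟨_, rfl, fun _ h => h.symm⟩
  rw [summable_partition hf hpart]
  simp only [tsum_degree_fiber]
  exact and_iff_right fun k => (finite_degree_preimage k).summable f

lemma ENNReal.tsum_eq_tsum_sum_piAntidiag (f : (ι → ℕ) → ENNReal) :
    ∑' α, f α = ∑' k, ∑ α ∈ univ.piAntidiag k, f α :=
  ENNReal.summable.hasSum.sum_piAntidiag.tsum_eq.symm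

lemma card_piAntidiag_univ (k : ℕ) :
    #(univ.piAntidiag k : Finset (ι → ℕ)) = (Fintype.card ι + k - 1).choose k := by
  rw [← map_sym_eq_piAntidiag, card_map, sym_univ, card_univ, Sym.card_sym_eq_choose]

end Fibers

namespace BohrHypercone

section CompSum

variable {ι : Type*} [Fintype ι]

/-- The coefficients of `z ↦ g (∑ j, z j)` when `g w = ∑ k, b k * w ^ k`. -/
def compSumCoeff {R : Type*} [Semiring R] (b : ℕ → R) (α : ι → ℕ) : R :=
  b (∑ j, α j) * Nat.multinomial univ α

lemma norm_compSumCoeff_mul_prod_pow {𝕜 : Type*} [RCLike 𝕜] (b : ℕ → 𝕜) (z : ι → 𝕜) (α : ι → ℕ) :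
    ‖compSumCoeff b α * ∏ j, z j ^ α j‖ =
      compSumCoeff (fun k => ‖b k‖) α * ∏ j, ‖z j‖ ^ α j := by
  simp only [compSumCoeff, norm_mul, norm_prod, norm_pow, RCLike.norm_natCast]

variable [DecidableEq ι]

lemma sum_piAntidiag_compSumCoeff_mul_prod_pow {R : Type*} [CommSemiring R] (b : ℕ → R)
    (z : ι → R) (k : ℕ) :
    ∑ α ∈ univ.piAntidiag k, compSumCoeff b α * ∏ j, z j ^ α j = b k * (∑ j, z j) ^ k := by
  rw [sum_pow_eq_sum_piAntidiag, mul_sum]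
  refine sum_congr rfl fun α hα => ?_
  rw [compSumCoeff, (mem_piAntidiag.1 hα).1, mul_assoc]

variable {𝕜 : Type*} [RCLike 𝕜]

lemma sum_piAntidiag_norm_compSumCoeff_mul_prod_pow (b : ℕ → 𝕜) (z : ι → 𝕜) (k : ℕ) :
    ∑ α ∈ univ.piAntidiag k, ‖compSumCoeff b α * ∏ j, z j ^ α j‖ =
      ‖b k‖ * (∑ j, ‖z j‖) ^ k := by
  simp only [norm_compSumCoeff_mul_prod_pow, sum_piAntidiag_compSumCoeff_mul_prod_pow]

lemma summable_norm_compSumCoeff_mul_prod_pow {b : ℕ → 𝕜} {z : ι → 𝕜}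
    (hb : Summable fun k => ‖b k‖ * (∑ j, ‖z j‖) ^ k) :
    Summable fun α => ‖compSumCoeff b α * ∏ j, z j ^ α j‖ := by
  rw [summable_iff_summable_sum_piAntidiag fun α => norm_nonneg _]
  simpa only [sum_piAntidiag_norm_compSumCoeff_mul_prod_pow] using hb

lemma hasSum_compSumCoeff_mul_prod_pow {b : ℕ → 𝕜} {z : ι → 𝕜} {g : 𝕜}
    (hg : HasSum (fun k => b k * (∑ j, z j) ^ k) g)
    (hb : Summable fun k => ‖b k‖ * (∑ j, ‖z j‖) ^ k) :
    HasSum (fun α => compSumCoeff b α * ∏ j, z j ^ α j) g := by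
  obtain ⟨S, hS⟩ := (summable_norm_compSumCoeff_mul_prod_pow hb).of_norm
  have hS' := hS.sum_piAntidiag
  simp only [sum_piAntidiag_compSumCoeff_mul_prod_pow] at hS'
  rwa [hg.unique hS']

end CompSum

section Weight

variable {n : ℕ}

noncomputable def hyperconeWeight (n : ℕ) (α : Fin n → ℕ) : ℝ :=
  (∏ j, ((α j).factorial : ℝ)) * ((n - 1).factorial : ℝ) / (((∑ j, α j) + n - 1).factorial : ℝ)

lemma multinomial_mul_hyperconeWeight (hn : 1 ≤ n) (α : Fin n → ℕ) :
    (Nat.multinomial univ α : ℝ) * hyperconeWeight n α =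
      (((n + ∑ j, α j - 1).choose (∑ j, α j) : ℕ) : ℝ)⁻¹ := by
  set k := ∑ j, α j
  have hspec : (Nat.multinomial univ α : ℝ) * ∏ j, ((α j).factorial : ℝ) = k.factorial := by
    exact_mod_cast (mul_comm _ _).trans (Nat.multinomial_spec univ α)
  have hchoose : ((n + k - 1).choose k : ℝ) * (k.factorial * (n - 1).factorial) =
      (n + k - 1).factorial := by
    have := Nat.choose_mul_factorial_mul_factorial (n := n + k - 1) (k := k) (by omega)
    rw [show n + k - 1 - k = n - 1 by omega] at this
    exact_mod_cast (mul_assoc _ _ _).symm.trans this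
  rw [hyperconeWeight, ← mul_div_assoc, ← mul_assoc, hspec, add_comm k, ← hchoose]
  field_simp

lemma sum_piAntidiag_multinomial_mul_hyperconeWeight (hn : 1 ≤ n) (k : ℕ) :
    ∑ α ∈ univ.piAntidiag k, (Nat.multinomial univ α : ℝ) * hyperconeWeight n α = 1 := by
  rw [sum_congr rfl fun α hα => by
      rw [multinomial_mul_hyperconeWeight hn, (mem_piAntidiag.1 hα).1],
    sum_const, card_piAntidiag_univ, Fintype.card_fin, nsmul_eq_mul,
    mul_inv_cancel₀ (by exact_mod_cast (Nat.choose_pos (by omega)).ne')]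

lemma tsum_ofReal_norm_compSumCoeff_mul_hyperconeWeight {𝕜 : Type*} [RCLike 𝕜] (hn : 1 ≤ n)
    (b : ℕ → 𝕜) {r : ℝ} (hr : 0 ≤ r) :
    ∑' α : Fin n → ℕ, ENNReal.ofReal (‖compSumCoeff b α‖ * hyperconeWeight n α * r ^ ∑ j, α j) =
      ∑' k, ENNReal.ofReal (‖b k‖ * r ^ k) := by
  rw [ENNReal.tsum_eq_tsum_sum_piAntidiag]
  refine tsum_congr fun k => ?_
  rw [← ENNReal.ofReal_sum_of_nonneg fun α _ => by unfold hyperconeWeight; positivity]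
  congr 1
  calc ∑ α ∈ univ.piAntidiag k, ‖compSumCoeff b α‖ * hyperconeWeight n α * r ^ ∑ j, α j
      = ‖b k‖ * r ^ k *
          ∑ α ∈ univ.piAntidiag k, (Nat.multinomial univ α : ℝ) * hyperconeWeight n α := by
        rw [mul_sum]
        refine sum_congr rfl fun α hα => ?_
        rw [compSumCoeff, (mem_piAntidiag.1 hα).1, norm_mul, RCLike.norm_natCast]
        ring
    _ = ‖b k‖ * r ^ k := by rw [sum_piAntidiag_multinomial_mul_hyperconeWeight hn, mul_one]

end Weight

section Moebius

/-- The Taylor coefficients at `0` of `w ↦ (a - w) / (1 - a * w)`. -/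
def moebiusCoeff {R : Type*} [Ring R] (a : R) : ℕ → R
  | 0 => a
  | k + 1 => -((1 - a ^ 2) * a ^ k)

lemma hasSum_moebiusCoeff_mul_pow {𝕜 : Type*} [NormedField 𝕜] [CompleteSpace 𝕜] {a w : 𝕜}
    (h : ‖a * w‖ < 1) :
    HasSum (fun k => moebiusCoeff a k * w ^ k) ((a - w) / (1 - a * w)) := by
  have hne : 1 - a * w ≠ 0 := fun h0 => by
    rw [← sub_eq_zero.1 h0, norm_one] at h
    exact lt_irrefl _ h
  have htail : (a - w) / (1 - a * w) - ∑ k ∈ range 1, moebiusCoeff a k * w ^ k =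
      -((1 - a ^ 2) * w) * (1 - a * w)⁻¹ := by
    simp only [sum_range_one, moebiusCoeff, pow_zero, mul_one]
    field_simp
    ring
  have hshift : (fun k => moebiusCoeff a (k + 1) * w ^ (k + 1)) =
      fun k => -((1 - a ^ 2) * w) * (a * w) ^ k := by
    ext k
    simp only [moebiusCoeff]
    ring
  rw [← hasSum_nat_add_iff' 1, htail, hshift]
  exact (hasSum_geometric_of_norm_lt_one h).mul_left _

lemma moebiusCoeff_ofReal (a : ℝ) (k : ℕ) : moebiusCoeff (a : ℂ) k = moebiusCoeff a k := by
  cases k <;> simp [moebiusCoeff]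

lemma hasSum_abs_moebiusCoeff_mul_pow {a r : ℝ} (ha₀ : 0 ≤ a) (ha₁ : a ≤ 1) (hr : 0 ≤ r)
    (h : a * r < 1) :
    HasSum (fun k => |moebiusCoeff a k| * r ^ k) (2 * a - (a - r) / (1 - a * r)) := by
  have hnorm : ‖a * r‖ < 1 := by rwa [Real.norm_of_nonneg (mul_nonneg ha₀ hr)]
  -- all coefficients but the first are `≤ 0`
  have hterm : ∀ k, |moebiusCoeff a k| * r ^ k =
      -(moebiusCoeff a k * r ^ k) + if k = 0 then 2 * a else 0 := by
    rintro (_ | k)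
    · simp only [moebiusCoeff, abs_of_nonneg ha₀, pow_zero, mul_one, ↓reduceIte]
      ring
    · have : 0 ≤ (1 - a ^ 2) * a ^ k := mul_nonneg (by nlinarith) (pow_nonneg ha₀ k)
      simp [moebiusCoeff, abs_of_nonneg this]
  simp only [hterm]
  rw [sub_eq_neg_add]
  exact (hasSum_moebiusCoeff_mul_pow hnorm).neg.add (hasSum_ite_eq 0 (2 * a))

lemma norm_sub_div_one_sub_mul_lt_one {a : ℝ} (ha : |a| < 1) {w : ℂ} (hw : ‖w‖ < 1) :
    ‖((a : ℂ) - w) / (1 - a * w)‖ < 1 := by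
  have haw : ‖(a : ℂ) * w‖ < 1 := by
    rw [norm_mul, Complex.norm_real, Real.norm_eq_abs]
    nlinarith [norm_nonneg w, abs_nonneg a]
  have hden : 0 < ‖1 - (a : ℂ) * w‖ := by
    have := norm_sub_norm_le (1 : ℂ) ((a : ℂ) * w)
    rw [norm_one] at this
    linarith
  have hid : ‖1 - (a : ℂ) * w‖ ^ 2 - ‖(a : ℂ) - w‖ ^ 2 = (1 - a ^ 2) * (1 - ‖w‖ ^ 2) := by
    simp only [Complex.sq_norm, Complex.normSq_apply, Complex.sub_re, Complex.sub_im,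
      Complex.mul_re, Complex.mul_im, Complex.ofReal_re, Complex.ofReal_im, Complex.one_re,
      Complex.one_im]
    ring
  have hpos : 0 < (1 - a ^ 2) * (1 - ‖w‖ ^ 2) :=
    mul_pos (by nlinarith [sq_abs a, abs_nonneg a]) (by nlinarith [norm_nonneg w])
  rw [norm_div, div_lt_one hden]
  exact lt_of_pow_lt_pow_left₀ 2 hden.le (by linarith)

end Moebius

end BohrHypercone

open BohrHypercone

/-- Theorem 7, upper estimate: for the unit hypercone `D⁰`, for every
`1/3 < r < 1` there is a power series bounded by `1` on `D⁰` whose Bohr-type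
sum of `L¹`-norms at radius `r` is at least `1`; hence `L_n(D⁰) ≤ 1/3`. -/
theorem bohr_hypercone_L1_upper (n : ℕ) (hn : 1 ≤ n) :
    ∀ r : ℝ, 1 / 3 < r → r < 1 →
      ∃ c : (Fin n → ℕ) → ℂ,
        (∀ z : Fin n → ℂ, (∑ j, ‖z j‖ < 1) →
          Summable (fun α : Fin n → ℕ => ‖c α * ∏ j, z j ^ α j‖)) ∧
        (∀ z : Fin n → ℂ, (∑ j, ‖z j‖ < 1) →
          ‖∑' α : Fin n → ℕ, c α * ∏ j, z j ^ α j‖ < 1) ∧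
        1 ≤ ∑' α : Fin n → ℕ, ENNReal.ofReal
          (‖c α‖ * ((∏ j, ((α j).factorial : ℝ)) * ((n - 1).factorial : ℝ) /
            (((∑ j, α j) + n - 1).factorial : ℝ)) * r ^ (∑ j, α j)) := by
  intro r hr₃ hr₁
  have hr₀ : 0 < r := by linarith
  set a := (1 - r) / (2 * r) with ha
  have ha₀ : 0 < a := div_pos (by linarith) (by linarith)
  have ha₁ : a < 1 := (div_lt_one (by linarith)).2 (by linarith)
  have habs : ∀ s : ℝ, 0 ≤ s → s < 1 →
      HasSum (fun k => ‖moebiusCoeff (a : ℂ) k‖ * s ^ k) (2 * a - (a - s) / (1 - a * s)) :=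
    fun s hs₀ hs₁ => by
      simpa only [moebiusCoeff_ofReal, Complex.norm_real, Real.norm_eq_abs] using
        hasSum_abs_moebiusCoeff_mul_pow ha₀.le ha₁.le hs₀ (by nlinarith)
  have hval : 2 * a - (a - r) / (1 - a * r) = 1 := by
    rw [show 1 - a * r = (1 + r) / 2 by rw [ha]; field_simp; ring, ha]
    field_simp
    ring
  refine ⟨compSumCoeff (moebiusCoeff (a : ℂ)), fun z hz => ?_, fun z hz => ?_, ?_⟩
  · exact summable_norm_compSumCoeff_mul_prod_pow (habs _ (by positivity) hz).summable
  · have hw : ‖∑ j, z j‖ < 1 := (norm_sum_le _ _).trans_lt hz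
    have haw : ‖(a : ℂ) * ∑ j, z j‖ < 1 := by
      rw [norm_mul, Complex.norm_real, Real.norm_of_nonneg ha₀.le]
      nlinarith [norm_nonneg (∑ j, z j)]
    rw [(hasSum_compSumCoeff_mul_prod_pow (hasSum_moebiusCoeff_mul_pow haw)
      (habs _ (by positivity) hz).summable).tsum_eq]
    exact norm_sub_div_one_sub_mul_lt_one (by rwa [abs_of_pos ha₀]) hw
  · have hbohr :=
      tsum_ofReal_norm_compSumCoeff_mul_hyperconeWeight hn (moebiusCoeff (a : ℂ)) hr₀.le
    rw [← ENNReal.ofReal_tsum_of_nonneg (fun k => by positivity) (habs r hr₀.le hr₁).summable,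
      (habs r hr₀.le hr₁).tsum_eq, hval, ENNReal.ofReal_one] at hbohr
    exact hbohr.ge
end

section
/- (Theorem 8, positive part.) Let Q ⊆ ℂⁿ be a complete circular domain centered at 0, i.e. an open set containing 0 such that z ∈ Q and t ∈ ℂ with |t| ≤ 1 implies t·z ∈ Q. Suppose f : Q → ℂ satisfies f(z) = Σ_{k=0}^∞ P_k(z) for all z ∈ Q, where each P_k : ℂⁿ → ℂ is a homogeneous polynomial of degree k and the series converges pointwise on Q, and suppose |f(z)| < 1 for all z ∈ Q. Then Σ_{k=0}^∞ |P_k(z)| < 1 for every z in the homothetic domain (1/3)·Q = {w/3 : w ∈ Q}. -/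
/-!
Fix `w ∈ Q`. By homogeneity, `t ↦ f (t • w)` is the power series `∑ Pₖ(w) tᵏ` on the unit disc,
with values in the unit disc. For such a series Wiener's inequality
`|cₖ| ≤ 1 - |c₀|²` (`k ≥ 1`) holds: averaging over the `k`-th roots of unity shows that
`∑ c_{mk} sᵐ` again maps the disc into itself, and Schwarz–Pick at `0` bounds its derivative
`c_k`. Summing, `∑ |cₖ| 3⁻ᵏ ≤ |c₀| + (1 - |c₀|²)/2 < 1`, which is the claim at `w / 3`.
-/

open Metric Set Complex ComplexConjugate Finset

namespace Complex

noncomputable def blaschkeFactor (a w : ℂ) : ℂ := (w - a) / (1 - conj a * w)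

theorem one_sub_conj_mul_ne_zero {a w : ℂ} (ha : ‖a‖ < 1) (hw : ‖w‖ < 1) :
    1 - conj a * w ≠ 0 := by
  refine sub_ne_zero.mpr fun h => ?_
  have : ‖conj a * w‖ < 1 := by
    rw [norm_mul, RCLike.norm_conj]
    exact mul_lt_one_of_nonneg_of_lt_one_left (norm_nonneg a) ha hw.le
  simp [← h] at this

theorem sq_norm_one_sub_conj_mul_sub_sq_norm_sub (a w : ℂ) :
    ‖1 - conj a * w‖ ^ 2 - ‖w - a‖ ^ 2 = (1 - ‖a‖ ^ 2) * (1 - ‖w‖ ^ 2) := by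
  simp only [Complex.sq_norm, normSq_apply, sub_re, sub_im, mul_re, mul_im, one_re, one_im,
    conj_re, conj_im]
  ring

theorem norm_blaschkeFactor_lt_one {a w : ℂ} (ha : ‖a‖ < 1) (hw : ‖w‖ < 1) :
    ‖blaschkeFactor a w‖ < 1 := by
  have hpos : 0 < ‖1 - conj a * w‖ := norm_pos_iff.mpr (one_sub_conj_mul_ne_zero ha hw)
  rw [blaschkeFactor, norm_div, div_lt_one hpos, ← sq_lt_sq₀ (norm_nonneg _) hpos.le, ← sub_pos,
    sq_norm_one_sub_conj_mul_sub_sq_norm_sub]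
  have ha2 : ‖a‖ ^ 2 < 1 := pow_lt_one₀ (norm_nonneg a) ha two_ne_zero
  have hw2 : ‖w‖ ^ 2 < 1 := pow_lt_one₀ (norm_nonneg w) hw two_ne_zero
  exact mul_pos (sub_pos.mpr ha2) (sub_pos.mpr hw2)

theorem mapsTo_blaschkeFactor {a : ℂ} (ha : ‖a‖ < 1) :
    MapsTo (blaschkeFactor a) (ball 0 1) (ball 0 1) := fun w hw => by
  rw [mem_ball_zero_iff] at hw ⊢
  exact norm_blaschkeFactor_lt_one ha hw

theorem differentiableOn_blaschkeFactor {a : ℂ} (ha : ‖a‖ < 1) :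
    DifferentiableOn ℂ (blaschkeFactor a) (ball 0 1) :=
  (differentiableOn_id.sub_const a).div ((differentiableOn_const 1).sub
    (differentiableOn_id.const_mul _)) fun _ hw =>
      one_sub_conj_mul_ne_zero ha (mem_ball_zero_iff.mp hw)

@[simp]
theorem blaschkeFactor_self (a : ℂ) : blaschkeFactor a a = 0 := by
  simp [blaschkeFactor]

theorem hasDerivAt_blaschkeFactor_self {a : ℂ} (ha : ‖a‖ < 1) :
    HasDerivAt (blaschkeFactor a) (1 - ‖a‖ ^ 2 : ℂ)⁻¹ a := by
  have hne : 1 - conj a * a ≠ 0 := one_sub_conj_mul_ne_zero ha ha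
  have hquot : HasDerivAt (blaschkeFactor a) _ a := ((hasDerivAt_id a).sub_const a).div
    (((hasDerivAt_id a).const_mul (conj a)).const_sub 1) hne
  refine hquot.congr_deriv ?_
  rw [id, sub_self, zero_mul, sub_zero, one_mul]
  rw [conj_mul'] at hne ⊢
  field_simp

theorem norm_deriv_zero_le_one_sub_sq_of_mapsTo_ball {φ : ℂ → ℂ}
    (hd : DifferentiableOn ℂ φ (ball 0 1)) (hφ : MapsTo φ (ball 0 1) (ball 0 1)) :
    ‖deriv φ 0‖ ≤ 1 - ‖φ 0‖ ^ 2 := by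
  have h0 : (0 : ℂ) ∈ ball (0 : ℂ) 1 := mem_ball_self one_pos
  have ha : ‖φ 0‖ < 1 := mem_ball_zero_iff.mp (hφ h0)
  have hψ : HasDerivAt (blaschkeFactor (φ 0) ∘ φ) ((1 - ‖φ 0‖ ^ 2 : ℂ)⁻¹ * deriv φ 0) 0 :=
    (hasDerivAt_blaschkeFactor_self ha).comp 0
      (hd.differentiableAt (isOpen_ball.mem_nhds h0)).hasDerivAt
  have hschwarz : ‖deriv (blaschkeFactor (φ 0) ∘ φ) 0‖ ≤ 1 / 1 := by
    refine norm_deriv_le_div_of_mapsTo_ball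
      ((differentiableOn_blaschkeFactor ha).comp hd hφ) ?_ one_pos
    simpa using ((mapsTo_blaschkeFactor ha).comp hφ).mono_right ball_subset_closedBall
  have hpos : 0 < 1 - ‖φ 0‖ ^ 2 := sub_pos.mpr (pow_lt_one₀ (norm_nonneg _) ha two_ne_zero)
  rw [hψ.deriv, norm_mul, norm_inv, ← ofReal_pow, ← ofReal_one, ← ofReal_sub, norm_real,
    Real.norm_of_nonneg hpos.le, div_one, inv_mul_le_iff₀ hpos, mul_one] at hschwarz
  exact hschwarz

end Complex

theorem IsPrimitiveRoot.sum_range_pow_pow {R : Type*} [CommRing R] [IsDomain R] {ζ : R} {k : ℕ}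
    (hζ : IsPrimitiveRoot ζ k) (m : ℕ) :
    ∑ j ∈ range k, (ζ ^ j) ^ m = if k ∣ m then (k : R) else 0 := by
  simp_rw [← pow_mul, mul_comm _ m, pow_mul]
  split_ifs with hdvd
  · simp [(hζ.pow_eq_one_iff_dvd m).mpr hdvd]
  · have hne : ζ ^ m - 1 ≠ 0 := sub_ne_zero.mpr fun h => hdvd ((hζ.pow_eq_one_iff_dvd m).mp h)
    have hgeom := geom_sum_mul (ζ ^ m) k
    rw [pow_right_comm, hζ.pow_eq_one, one_pow, sub_self] at hgeom
    exact (mul_eq_zero.mp hgeom).resolve_right hne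

theorem IsPrimitiveRoot.hasSum_comp_mul_of_hasSum_rotations {K : Type*} [Field K]
    [TopologicalSpace K] [IsTopologicalRing K] [CharZero K] {c : ℕ → K} {v : ℕ → K}
    {ζ z : K} {k : ℕ} (hζ : IsPrimitiveRoot ζ k) (hk : k ≠ 0)
    (hv : ∀ j ∈ range k, HasSum (fun m => c m * (ζ ^ j * z) ^ m) (v j)) :
    HasSum (fun m => c (m * k) * (z ^ k) ^ m) ((∑ j ∈ range k, v j) / k) := by
  have hsum := hasSum_sum hv
  have hfilter : ∀ m, ∑ j ∈ range k, c m * (ζ ^ j * z) ^ m =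
      c m * z ^ m * if k ∣ m then (k : K) else 0 := fun m => by
    rw [← hζ.sum_range_pow_pow, mul_sum]
    exact sum_congr rfl fun j _ => by ring
  simp_rw [hfilter] at hsum
  rw [← (mul_left_injective₀ hk).hasSum_iff] at hsum
  · refine (hsum.div_const (k : K)).congr_fun fun m => ?_
    rw [Function.comp_apply, if_pos (dvd_mul_left k m), ← pow_mul, mul_comm k m]
    field_simp
  · rintro m hm
    rw [if_neg, mul_zero]
    rintro ⟨q, rfl⟩
    exact hm ⟨q, mul_comm q k⟩

theorem MvPolynomial.IsHomogeneous.eval_smul {R σ : Type*} [CommSemiring R]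
    {φ : MvPolynomial σ R} {k : ℕ} (hφ : φ.IsHomogeneous k) (t : R) (w : σ → R) :
    eval (t • w) φ = t ^ k * eval w φ := by
  rw [eval_eq, eval_eq, mul_sum]
  refine sum_congr rfl fun d hd => ?_
  have hdeg : ∑ i ∈ d.support, d i = k := by
    rw [← Finsupp.degree_apply, Finsupp.degree_eq_weight_one]
    exact hφ (mem_support_iff.mp hd)
  simp_rw [Pi.smul_apply, smul_eq_mul, mul_pow, prod_mul_distrib, prod_pow_eq_pow_sum, hdeg]
  ring

theorem hasFPowerSeriesOnBall_tsum_ofScalars {c : ℕ → ℂ}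
    (hc : ∀ t : ℂ, ‖t‖ < 1 → Summable fun m => c m * t ^ m) :
    HasFPowerSeriesOnBall (fun t => ∑' m, c m * t ^ m)
      (FormalMultilinearSeries.ofScalars ℂ c) 0 1 where
  r_le := ENNReal.le_of_forall_nnreal_lt fun r hr => by
    refine (FormalMultilinearSeries.ofScalars ℂ c).le_radius_of_tendsto (l := 0) ?_
    have hterms := (hc r (by simpa using hr)).tendsto_atTop_zero.norm
    simpa [FormalMultilinearSeries.ofScalars_norm] using hterms
  r_pos := one_pos
  hasSum {y} hy := by
    have hy' : ‖y‖ < 1 := by simpa [enorm_eq_nnnorm, ← NNReal.coe_lt_one] using hy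
    simpa [FormalMultilinearSeries.ofScalars_apply_eq, mul_comm] using (hc y hy').hasSum

def PowerSeriesMapsDisc (c : ℕ → ℂ) : Prop :=
  ∀ t : ℂ, ‖t‖ < 1 → Summable (fun m => c m * t ^ m) ∧ ‖∑' m, c m * t ^ m‖ < 1

namespace PowerSeriesMapsDisc

variable {c : ℕ → ℂ}

theorem norm_coeff_zero_lt_one (hc : PowerSeriesMapsDisc c) : ‖c 0‖ < 1 := by
  simpa [zero_pow_eq, mul_ite] using (hc 0 (by simp)).2

theorem norm_coeff_one_le (hc : PowerSeriesMapsDisc c) : ‖c 1‖ ≤ 1 - ‖c 0‖ ^ 2 := by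
  have hser := hasFPowerSeriesOnBall_tsum_ofScalars fun t ht => (hc t ht).1
  have hd := hser.differentiableOn
  rw [← ENNReal.coe_one, eball_coe, NNReal.coe_one] at hd
  have hmaps : MapsTo (fun t => ∑' m, c m * t ^ m) (ball 0 1) (ball 0 1) := fun t ht => by
    rw [mem_ball_zero_iff] at ht ⊢
    exact (hc t ht).2
  have hpick := norm_deriv_zero_le_one_sub_sq_of_mapsTo_ball hd hmaps
  rw [hser.hasFPowerSeriesAt.deriv, ← hser.hasFPowerSeriesAt.coeff_zero fun _ => 0] at hpick
  simpa using hpick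

theorem comp_mul (hc : PowerSeriesMapsDisc c) {k : ℕ} (hk : k ≠ 0) :
    PowerSeriesMapsDisc fun m => c (m * k) := by
  intro s hs
  obtain ⟨z, rfl⟩ := IsAlgClosed.exists_pow_nat_eq s (Nat.pos_of_ne_zero hk)
  have hz : ‖z‖ < 1 := by
    rwa [norm_pow, pow_lt_one_iff_of_nonneg (norm_nonneg z) hk] at hs
  obtain ⟨ζ, hζ⟩ : ∃ ζ : ℂ, IsPrimitiveRoot ζ k := ⟨_, isPrimitiveRoot_exp k hk⟩
  have hrot : ∀ j, ‖ζ ^ j * z‖ < 1 := fun j => by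
    rwa [norm_mul, norm_pow, hζ.norm'_eq_one hk, one_pow, one_mul]
  have hsum := hζ.hasSum_comp_mul_of_hasSum_rotations hk fun j _ => (hc _ (hrot j)).1.hasSum
  refine ⟨hsum.summable, ?_⟩
  rw [hsum.tsum_eq, norm_div, norm_natCast, div_lt_one (by positivity)]
  calc ‖∑ j ∈ range k, ∑' m, c m * (ζ ^ j * z) ^ m‖
      ≤ ∑ j ∈ range k, ‖∑' m, c m * (ζ ^ j * z) ^ m‖ := norm_sum_le _ _
    _ < ∑ j ∈ range k, 1 :=
      sum_lt_sum_of_nonempty (nonempty_range_iff.mpr hk) fun j _ => (hc _ (hrot j)).2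
    _ = k := by simp

theorem norm_coeff_le (hc : PowerSeriesMapsDisc c) {k : ℕ} (hk : k ≠ 0) :
    ‖c k‖ ≤ 1 - ‖c 0‖ ^ 2 := by
  simpa using (hc.comp_mul hk).norm_coeff_one_le

theorem norm_coeff_le_one (hc : PowerSeriesMapsDisc c) (k : ℕ) : ‖c k‖ ≤ 1 := by
  rcases eq_or_ne k 0 with rfl | hk
  · exact hc.norm_coeff_zero_lt_one.le
  · exact (hc.norm_coeff_le hk).trans (sub_le_self _ (sq_nonneg _))

theorem summable_norm_mul_pow (hc : PowerSeriesMapsDisc c) {r : ℝ} (hr₀ : 0 ≤ r) (hr : r < 1) :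
    Summable fun k => ‖c k‖ * r ^ k :=
  (summable_geometric_of_lt_one hr₀ hr).of_nonneg_of_le (fun k => by positivity)
    fun k => mul_le_of_le_one_left (by positivity) (hc.norm_coeff_le_one k)

theorem tsum_norm_mul_pow_lt_one (hc : PowerSeriesMapsDisc c) {r : ℝ} (hr₀ : 0 ≤ r)
    (hr : r ≤ 3⁻¹) : ∑' k, ‖c k‖ * r ^ k < 1 := by
  set a := ‖c 0‖
  have ha : a < 1 := hc.norm_coeff_zero_lt_one
  have hsum := hc.summable_norm_mul_pow hr₀ (hr.trans_lt (by norm_num))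
  have hgeom : HasSum (fun k : ℕ => (1 - a ^ 2) * (3⁻¹ : ℝ) ^ (k + 1)) ((1 - a ^ 2) / 2) := by
    have h := (hasSum_geometric_of_lt_one (r := (3⁻¹ : ℝ)) (by norm_num) (by norm_num)).mul_left
      ((1 - a ^ 2) * 3⁻¹)
    rw [show (1 - a ^ 2) * 3⁻¹ * (1 - (3⁻¹ : ℝ))⁻¹ = (1 - a ^ 2) / 2 by ring] at h
    exact h.congr_fun fun k => by ring
  have hterm : ∀ k, ‖c (k + 1)‖ * r ^ (k + 1) ≤ (1 - a ^ 2) * (3⁻¹ : ℝ) ^ (k + 1) := fun k =>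
    mul_le_mul (hc.norm_coeff_le k.succ_ne_zero) (pow_le_pow_left₀ hr₀ hr _) (by positivity)
      (by nlinarith [norm_nonneg (c 0)])
  have htail : ∑' k, ‖c (k + 1)‖ * r ^ (k + 1) ≤ (1 - a ^ 2) / 2 :=
    hasSum_le hterm ((summable_nat_add_iff 1).mpr hsum).hasSum hgeom
  rw [hsum.tsum_eq_zero_add, pow_zero, mul_one]
  nlinarith

end PowerSeriesMapsDisc

theorem bohr_homogeneous_expansion_general (n : ℕ) (Q : Set (Fin n → ℂ))
    (hQcirc : ∀ z ∈ Q, ∀ t : ℂ, ‖t‖ ≤ 1 → t • z ∈ Q)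
    (P : ℕ → MvPolynomial (Fin n) ℂ) (hP : ∀ k, (P k).IsHomogeneous k)
    (f : (Fin n → ℂ) → ℂ)
    (hf : ∀ z ∈ Q, HasSum (fun k => MvPolynomial.eval z (P k)) (f z))
    (hbound : ∀ z ∈ Q, ‖f z‖ < 1) :
    ∀ z ∈ (fun w : Fin n → ℂ => ((3 : ℝ)⁻¹ : ℝ) • w) '' Q,
      Summable (fun k => ‖MvPolynomial.eval z (P k)‖) ∧
      ∑' k, ‖MvPolynomial.eval z (P k)‖ < 1 := by
  rintro _ ⟨w, hw, rfl⟩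
  have hc : PowerSeriesMapsDisc fun k => MvPolynomial.eval w (P k) := fun t ht => by
    have hsum := hf _ (hQcirc w hw t ht.le)
    simp_rw [(hP _).eval_smul, mul_comm (t ^ _)] at hsum
    exact ⟨hsum.summable, hsum.tsum_eq ▸ hbound _ (hQcirc w hw t ht.le)⟩
  have hscale : ∀ k, ‖MvPolynomial.eval ((3⁻¹ : ℝ) • w) (P k)‖ =
      ‖MvPolynomial.eval w (P k)‖ * 3⁻¹ ^ k := fun k => by
    rw [← algebraMap_smul ℂ, (hP k).eval_smul, norm_mul, norm_pow, mul_comm]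
    simp
  simp_rw [hscale]
  exact ⟨hc.summable_norm_mul_pow (by norm_num) (by norm_num),
    hc.tsum_norm_mul_pow_lt_one (by norm_num) le_rfl⟩

/-- Theorem 8, positive part: if `f = Σ P_k` on a complete circular domain `Q`
(with `P_k` homogeneous of degree `k`) and `|f| < 1` on `Q`, then
`Σ |P_k(z)| < 1` on `(1/3)·Q`. -/
theorem bohr_homogeneous_expansion (n : ℕ) (Q : Set (Fin n → ℂ))
    (hQopen : IsOpen Q) (hQ0 : (0 : Fin n → ℂ) ∈ Q)
    (hQcirc : ∀ z ∈ Q, ∀ t : ℂ, ‖t‖ ≤ 1 → t • z ∈ Q)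
    (P : ℕ → MvPolynomial (Fin n) ℂ) (hP : ∀ k, (P k).IsHomogeneous k)
    (f : (Fin n → ℂ) → ℂ)
    (hf : ∀ z ∈ Q, HasSum (fun k => MvPolynomial.eval z (P k)) (f z))
    (hbound : ∀ z ∈ Q, ‖f z‖ < 1) :
    ∀ z ∈ (fun w : Fin n → ℂ => ((3 : ℝ)⁻¹ : ℝ) • w) '' Q,
      Summable (fun k => ‖MvPolynomial.eval z (P k)‖) ∧
      ∑' k, ‖MvPolynomial.eval z (P k)‖ < 1 :=
  bohr_homogeneous_expansion_general n Q hQcirc P hP f hf hbound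
end

section
/- (Theorem 8, sharpness for convex domains.) Let Q ⊆ ℂⁿ be a convex complete circular domain centered at 0 (open, containing 0, with z ∈ Q and |t| ≤ 1 implying tz ∈ Q, and Q convex), Q ≠ ℂⁿ. Then for every r with 1/3 < r < 1 there exist homogeneous polynomials P_k of degree k (k = 0,1,2,…) such that the series f(z) = Σ_{k=0}^∞ P_k(z) converges pointwise on Q with |f(z)| < 1 for all z ∈ Q, and a point z₀ ∈ r·Q with Σ_{k=0}^∞ |P_k(z₀)| ≥ 1. -/
/-!
Let `p ∉ Q`. Hahn–Banach for the gauge seminorm of `Q` gives a complex linear form `ℓ` with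
`|ℓ| ≤ gauge Q` and `ℓ p = gauge Q p ≥ 1`; hence `|ℓ| < 1` on `Q`, and `ℓ` takes every value
`t ∈ [0, 1)` on `Q`. Take `f = φ ∘ ℓ` with the disc automorphism `φ w = (a - w) / (1 - a w)`,
`0 < a < 1`: then `|f| < 1` on `Q`, and `P_k = c_k ℓ^k` with `c_0 = a`, `c_k = -(1 - a²) a^(k-1)`.
At a point where `ℓ = ρ ≥ 0` the Bohr sum is `a + (1 - a²) ρ / (1 - a ρ)`, which is `≥ 1` once
`(1 + 2a) ρ ≥ 1`. For `r > 1/3` choose `a < 1` with `(1 + 2a) r a > 1` and `z₁ ∈ Q` with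
`ℓ z₁ = a`; then `z₀ = r z₁` works.
-/

open MvPolynomial Filter Topology

theorem Seminorm.exists_dual_norm_le_apply_eq {𝕜 E : Type*} [RCLike 𝕜] [AddCommGroup E]
    [Module 𝕜 E] (p : Seminorm 𝕜 E) (x : E) :
    ∃ ℓ : Module.Dual 𝕜 E, (∀ z, ‖ℓ z‖ ≤ p z) ∧ ℓ x = p x := by
  rcases eq_or_ne x 0 with rfl | hx
  · exact ⟨0, fun z => by simp, by simp⟩
  let coord : Module.Dual 𝕜 (𝕜 ∙ x) := LinearEquiv.coord 𝕜 E x hx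
  obtain ⟨ℓ, hℓx, hℓp⟩ := Module.Dual.exists_extension_of_le_seminorm (𝕜 ∙ x)
    ((p x : 𝕜) • coord) (p := p) fun y => by
      rw [← LinearEquiv.coord_apply_smul 𝕜 E x hx y, map_smul_eq_mul, mul_comm]
      simp [coord, norm_smul, abs_of_nonneg (apply_nonneg p x)]
  refine ⟨ℓ, hℓp, ?_⟩
  simpa [coord, LinearEquiv.coord_self, RCLike.real_smul_eq_coe_mul] using
    hℓx ⟨x, Submodule.mem_span_singleton_self x⟩

theorem exists_dual_forall_norm_lt_one_of_balanced {𝕜 E : Type*} [RCLike 𝕜] [AddCommGroup E]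
    [Module 𝕜 E] [Module ℝ E] [IsScalarTower ℝ 𝕜 E] [TopologicalSpace E] [ContinuousSMul ℝ E]
    {Q : Set E} (hQopen : IsOpen Q) (hQ0 : 0 ∈ Q) (hQbal : Balanced 𝕜 Q) (hQconv : Convex ℝ Q)
    (hQne : Q ≠ Set.univ) :
    ∃ ℓ : Module.Dual 𝕜 E, (∀ z ∈ Q, ‖ℓ z‖ < 1) ∧ ∀ t : ℝ, 0 ≤ t → t < 1 → ∃ z ∈ Q, ℓ z = t := by
  have hQabs : Absorbent ℝ Q := absorbent_nhds_zero (hQopen.mem_nhds hQ0)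
  obtain ⟨p, hp⟩ := (Set.ne_univ_iff_exists_notMem Q).mp hQne
  have hgp : 1 ≤ gauge Q p :=
    one_le_gauge_of_notMem (hQconv.starConvex hQ0) hQabs.absorbs hp
  obtain ⟨ℓ, hℓle, hℓp⟩ := (gaugeSeminorm hQbal hQconv hQabs).exists_dual_norm_le_apply_eq p
  simp only [gaugeSeminorm_toFun] at hℓle hℓp
  refine ⟨ℓ, fun z hz => (hℓle z).trans_lt (gauge_lt_one_of_mem_of_isOpen hQopen hz),
    fun t ht0 ht1 =>
      ⟨(t / gauge Q p) • p, setOfPred_gauge_lt_one_subset_self hQconv hQ0 hQabs ?_, ?_⟩⟩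
  · have : 0 < gauge Q p := by linarith
    simp only [Set.mem_ofPred_eq, gauge_smul_of_nonneg (div_nonneg ht0 this.le), smul_eq_mul]
    rwa [div_mul_cancel₀ _ this.ne']
  · have : gauge Q p ≠ 0 := by positivity
    rw [LinearMap.map_smul_of_tower, hℓp, RCLike.real_smul_eq_coe_mul, ← RCLike.ofReal_mul,
      div_mul_cancel₀ t this]

def mobiusCoeff (a : ℝ) : ℕ → ℝ
  | 0 => a
  | k + 1 => -(1 - a ^ 2) * a ^ k

theorem hasSum_mobiusCoeff_mul_pow {a : ℝ} {w : ℂ} (h : ‖(a : ℂ) * w‖ < 1) :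
    HasSum (fun k => (mobiusCoeff a k : ℂ) * w ^ k) ((a - w) / (1 - a * w)) := by
  have hne : (1 : ℂ) - a * w ≠ 0 := by
    rw [sub_ne_zero]; rintro h1; simp [← h1] at h
  have htail : ∀ k, (mobiusCoeff a (k + 1) : ℂ) * w ^ (k + 1) = -(1 - a ^ 2) * w * (a * w) ^ k :=
    fun k => by simp only [mobiusCoeff]; push_cast; ring
  have hval : (a - w) / (1 - a * w) - ∑ k ∈ Finset.range 1, (mobiusCoeff a k : ℂ) * w ^ k =
      -(1 - a ^ 2) * w * (1 - a * w)⁻¹ := by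
    simp only [Finset.sum_range_one, mobiusCoeff]; field_simp; ring
  rw [← hasSum_nat_add_iff' 1, hval]
  simp only [htail]
  exact (hasSum_geometric_of_norm_lt_one h).mul_left _

theorem hasSum_abs_mobiusCoeff_mul_pow {a ρ : ℝ} (ha0 : 0 ≤ a) (ha1 : a ≤ 1) (hρ : 0 ≤ ρ)
    (h : a * ρ < 1) :
    HasSum (fun k => |mobiusCoeff a k| * ρ ^ k) (a + (1 - a ^ 2) * ρ / (1 - a * ρ)) := by
  have htail : ∀ k, |mobiusCoeff a (k + 1)| * ρ ^ (k + 1) = (1 - a ^ 2) * ρ * (a * ρ) ^ k :=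
    fun k => by
      rw [mobiusCoeff, abs_mul, abs_neg, abs_of_nonneg (by nlinarith),
        abs_of_nonneg (by positivity)]
      ring
  have hval : a + (1 - a ^ 2) * ρ / (1 - a * ρ) - ∑ k ∈ Finset.range 1, |mobiusCoeff a k| * ρ ^ k =
      (1 - a ^ 2) * ρ * (1 - a * ρ)⁻¹ := by
    simp [mobiusCoeff, abs_of_nonneg ha0, div_eq_mul_inv]
  rw [← hasSum_nat_add_iff' 1, hval]
  simp only [htail]
  exact (hasSum_geometric_of_lt_one (by positivity) h).mul_left _

theorem norm_mobius_lt_one {a : ℝ} {w : ℂ} (ha : |a| < 1) (hw : ‖w‖ < 1) :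
    ‖(a - w) / (1 - a * w)‖ < 1 := by
  have key : ‖(1 : ℂ) - a * w‖ ^ 2 - ‖(a : ℂ) - w‖ ^ 2 = (1 - a ^ 2) * (1 - ‖w‖ ^ 2) := by
    simp only [Complex.sq_norm, Complex.normSq_apply, Complex.sub_re, Complex.sub_im,
      Complex.one_re, Complex.one_im, Complex.mul_re, Complex.mul_im, Complex.ofReal_re,
      Complex.ofReal_im]
    ring
  have hpos : 0 < (1 - a ^ 2) * (1 - ‖w‖ ^ 2) := by
    have : a ^ 2 < 1 := by nlinarith [abs_nonneg a, sq_abs a]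
    have : ‖w‖ ^ 2 < 1 := by nlinarith [norm_nonneg w]
    apply mul_pos <;> linarith
  have hlt : ‖(a : ℂ) - w‖ < ‖(1 : ℂ) - a * w‖ :=
    lt_of_pow_lt_pow_left₀ 2 (norm_nonneg _) (by linarith)
  rw [norm_div, div_lt_one ((norm_nonneg _).trans_lt hlt)]
  exact hlt

theorem one_le_add_mul_div_of_one_le_mul {a ρ : ℝ} (ha1 : a < 1) (haρ : a * ρ < 1)
    (h : 1 ≤ (1 + 2 * a) * ρ) : 1 ≤ a + (1 - a ^ 2) * ρ / (1 - a * ρ) := by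
  rw [← sub_le_iff_le_add', le_div_iff₀ (by linarith)]
  nlinarith [mul_le_mul_of_nonneg_left h (sub_nonneg.mpr ha1.le)]

theorem MvPolynomial.exists_isHomogeneous_eval_eq_mul_pow {σ R : Type*} [Fintype σ]
    [DecidableEq σ] [CommSemiring R] (ℓ : Module.Dual R (σ → R)) (c : ℕ → R) :
    ∃ P : ℕ → MvPolynomial σ R,
      (∀ k, (P k).IsHomogeneous k) ∧ ∀ z k, eval z (P k) = c k * ℓ z ^ k := by
  let L : MvPolynomial σ R := ∑ i, C (ℓ fun j => if i = j then 1 else 0) * X i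
  have hL : L.IsHomogeneous 1 := IsHomogeneous.sum _ _ _ fun i _ => isHomogeneous_C_mul_X _ _
  have hLeval : ∀ z, eval z L = ℓ z := fun z => by
    simp [L, LinearMap.pi_apply_eq_sum_univ ℓ z, mul_comm]
  refine ⟨fun k => C (c k) * L ^ k, fun k => ?_, fun z k => by simp [hLeval]⟩
  simpa using (hL.pow k).C_mul (c k)

theorem ENNReal.tsum_coe_nnnorm_eq_ofReal {ι E : Type*} [SeminormedAddCommGroup E] {f : ι → E}
    {S : ℝ} (h : HasSum (fun i => ‖f i‖) S) : ∑' i, (‖f i‖₊ : ENNReal) = ENNReal.ofReal S := by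
  rw [← h.tsum_eq, ENNReal.ofReal_tsum_of_nonneg (fun _ => norm_nonneg _) h.summable]
  simp [ofReal_norm, enorm_eq_nnnorm]

-- `1 / (1 + 2a)` is the Bohr radius of `w ↦ (a - w) / (1 - a w)`; it tends to `1 / 3` as `a → 1`.
theorem exists_lt_one_one_lt_mul_of_one_third_lt {r : ℝ} (hr : 1 / 3 < r) :
    ∃ a, 0 < a ∧ a < 1 ∧ 1 < (1 + 2 * a) * (r * a) := by
  have hcont : Continuous fun a : ℝ => (1 + 2 * a) * (r * a) := by fun_prop
  have hnear : ∀ᶠ a in 𝓝 (1 : ℝ), 0 < a ∧ 1 < (1 + 2 * a) * (r * a) :=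
    (lt_mem_nhds one_pos).and (hcont.tendsto 1 |>.eventually (lt_mem_nhds (by linarith)))
  obtain ⟨a, ⟨ha0, hra⟩, ha1⟩ := ((hnear.filter_mono nhdsWithin_le_nhds).and
    (self_mem_nhdsWithin (s := Set.Iio 1))).exists
  exact ⟨a, ha0, ha1, hra⟩

/-- Theorem 8, sharpness: for a convex complete circular domain `Q ≠ ℂⁿ`, the
constant `1/3` is best possible. -/
theorem bohr_homogeneous_sharp (n : ℕ) (Q : Set (Fin n → ℂ))
    (hQopen : IsOpen Q) (hQ0 : (0 : Fin n → ℂ) ∈ Q)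
    (hQcirc : ∀ z ∈ Q, ∀ t : ℂ, ‖t‖ ≤ 1 → t • z ∈ Q)
    (hQconv : Convex ℝ Q) (hQne : Q ≠ Set.univ) :
    ∀ r : ℝ, 1 / 3 < r → r < 1 →
      ∃ P : ℕ → MvPolynomial (Fin n) ℂ,
        (∀ k, (P k).IsHomogeneous k) ∧
        (∀ z ∈ Q, Summable (fun k => MvPolynomial.eval z (P k))) ∧
        (∀ z ∈ Q, ‖∑' k, MvPolynomial.eval z (P k)‖ < 1) ∧
        ∃ z₀ ∈ (fun w : Fin n → ℂ => r • w) '' Q,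
          1 ≤ ∑' k, (‖MvPolynomial.eval z₀ (P k)‖₊ : ENNReal) := by
  intro r hr13 hr1
  have hQbal : Balanced ℂ Q := fun t ht => Set.smul_set_subset_iff.mpr fun z hz => hQcirc z hz t ht
  obtain ⟨ℓ, hℓQ, hℓ_attains⟩ :=
    exists_dual_forall_norm_lt_one_of_balanced hQopen hQ0 hQbal hQconv hQne
  obtain ⟨a, ha0, ha1, hra⟩ := exists_lt_one_one_lt_mul_of_one_third_lt hr13
  have hr0 : 0 < r := by linarith
  have hra0 : 0 ≤ r * a := by positivity
  have haρ : a * (r * a) < 1 := mul_lt_one_of_nonneg_of_lt_one_left ha0.le ha1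
    (mul_lt_one_of_nonneg_of_lt_one_left hr0.le hr1 ha1.le).le
  obtain ⟨z₁, hz₁, hℓz₁⟩ := hℓ_attains a ha0.le ha1
  obtain ⟨P, hPhom, hPeval⟩ :=
    exists_isHomogeneous_eval_eq_mul_pow ℓ fun k => (mobiusCoeff a k : ℂ)
  have hsum (z) (hz : z ∈ Q) : HasSum (fun k => eval z (P k)) ((a - ℓ z) / (1 - a * ℓ z)) := by
    simp only [hPeval]
    refine hasSum_mobiusCoeff_mul_pow ?_
    rw [norm_mul, Complex.norm_real, Real.norm_of_nonneg ha0.le]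
    nlinarith [hℓQ z hz, norm_nonneg (ℓ z)]
  have hbohr : HasSum (fun k => ‖eval (r • z₁) (P k)‖)
      (a + (1 - a ^ 2) * (r * a) / (1 - a * (r * a))) := by
    have hℓz₀ : ℓ (r • z₁) = ((r * a : ℝ) : ℂ) := by
      rw [LinearMap.map_smul_of_tower, hℓz₁, RCLike.ofReal_eq_complex_ofReal, Complex.real_smul,
        Complex.ofReal_mul]
    simp only [hPeval, hℓz₀, norm_mul, norm_pow, Complex.norm_real, Real.norm_eq_abs,
      abs_of_nonneg ha0.le, abs_of_nonneg hr0.le]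
    exact hasSum_abs_mobiusCoeff_mul_pow ha0.le ha1.le hra0 haρ
  refine ⟨P, hPhom, fun z hz => (hsum z hz).summable, fun z hz => ?_, r • z₁, ⟨z₁, hz₁, rfl⟩, ?_⟩
  · rw [(hsum z hz).tsum_eq]
    exact norm_mobius_lt_one (abs_lt.mpr ⟨by linarith, ha1⟩) (hℓQ z hz)
  · rw [ENNReal.tsum_coe_nnnorm_eq_ofReal hbohr, ENNReal.one_le_ofReal]
    exact one_le_add_mul_div_of_one_le_mul ha1 haρ hra.le
end

section
/- (Wiener-type strengthening, inequality (16).) Let D ⊆ ℂⁿ be a bounded complete n-circular (Reinhardt) domain and let f(z) = Σ_α c_α z^α be a power series converging at every point of D with |f(z)| < 1 on D. Then for every multi-index α with |α| = α₁+…+α_n ≥ 1, |c_α| ≤ (1 − |c₀|²)/d_α(D), where c₀ is the constant term and d_α(D) = sup_{z ∈ D} |z^α|. -/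
/-!
Restricting `f` to the line through a point `w ∈ D` gives the one-variable series
`t ↦ ∑ₖ Pₖ(w) tᵏ`, where `Pₖ` is the homogeneous part of degree `k` of `f`; it is bounded by `1`
on the unit disc. Averaging it over the `m`-th roots of unity yields a function of `tᵐ` that still
maps the disc into itself, and the Schwarz–Pick lemma at the origin gives Wiener's inequality
`|Pₘ(w)| ≤ 1 - |c₀|²`. Averaging `Pₘ(u₁w₁, …, uₙwₙ)` against `ū^α` over a grid of roots of unity
`u` isolates the monomial `c_α w^α`, so `|c_α| |w^α| ≤ 1 - |c₀|²` on `D`, and the supremum over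
`D` finishes the proof.
-/

open Complex ComplexConjugate Metric Finset Set

theorem norm_sub_lt_norm_one_sub_conj_mul {a w : ℂ} (ha : ‖a‖ < 1) (hw : ‖w‖ < 1) :
    ‖w - a‖ < ‖1 - conj a * w‖ := by
  have key : ‖1 - conj a * w‖ ^ 2 - ‖w - a‖ ^ 2 = (1 - ‖a‖ ^ 2) * (1 - ‖w‖ ^ 2) := by
    simp only [← normSq_eq_norm_sq, ← ofReal_inj, ofReal_sub, ofReal_mul, ofReal_one,
      ← mul_conj, map_sub, map_mul, map_one, conj_conj]
    ring
  have hpos : 0 < (1 - ‖a‖ ^ 2) * (1 - ‖w‖ ^ 2) := by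
    apply mul_pos <;> nlinarith [norm_nonneg a, norm_nonneg w]
  exact lt_of_pow_lt_pow_left₀ 2 (norm_nonneg _) (by linarith)

theorem hasDerivAt_mobius {a : ℂ} (ha : ‖a‖ < 1) :
    HasDerivAt (fun w => (w - a) / (1 - conj a * w)) (1 / (1 - ‖a‖ ^ 2 : ℝ)) a := by
  have hden : (1 : ℂ) - conj a * a = (1 - ‖a‖ ^ 2 : ℝ) := by
    rw [mul_comm, mul_conj, normSq_eq_norm_sq]; push_cast; ring
  have hne : (1 : ℂ) - conj a * a ≠ 0 := by
    rw [hden, ofReal_ne_zero]; nlinarith [norm_nonneg a]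
  refine (((hasDerivAt_id a).sub_const a).div
    ((hasDerivAt_const a 1).sub ((hasDerivAt_id a).const_mul (conj a))) hne).congr_deriv ?_
  rw [← hden]
  field_simp
  simp [sq, hne]

/-- Schwarz–Pick at the origin. -/
theorem norm_deriv_zero_le_one_sub_sq {f : ℂ → ℂ} (hd : DifferentiableOn ℂ f (ball 0 1))
    (hf : MapsTo f (ball 0 1) (ball 0 1)) : ‖deriv f 0‖ ≤ 1 - ‖f 0‖ ^ 2 := by
  set a := f 0
  have ha : ‖a‖ < 1 := mem_ball_zero_iff.1 (hf (mem_ball_self one_pos))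
  have hden : ∀ w ∈ ball (0 : ℂ) 1, 1 - conj a * f w ≠ 0 := fun w hw h =>
    (norm_sub_lt_norm_one_sub_conj_mul ha (mem_ball_zero_iff.1 (hf hw))).not_ge
      (by rw [h, norm_zero]; exact norm_nonneg _)
  set g := fun w => (f w - a) / (1 - conj a * f w)
  have hg : DifferentiableOn ℂ g (ball 0 1) :=
    (hd.sub_const a).div ((differentiableOn_const 1).sub (hd.const_mul _)) hden
  have hg_maps : MapsTo g (ball 0 1) (closedBall (g 0) 1) := fun w hw => by
    have := norm_sub_lt_norm_one_sub_conj_mul ha (mem_ball_zero_iff.1 (hf hw))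
    simp only [g, a, sub_self, zero_div, mem_closedBall_zero_iff, norm_div]
    exact div_le_one_of_le₀ this.le (norm_nonneg _)
  have hg_deriv : HasDerivAt g (1 / (1 - ‖a‖ ^ 2 : ℝ) * deriv f 0) 0 :=
    (hasDerivAt_mobius ha).comp 0 (hd.differentiableAt (ball_mem_nhds 0 one_pos)).hasDerivAt
  have hpos : 0 < 1 - ‖a‖ ^ 2 := by nlinarith [norm_nonneg a]
  have := Complex.norm_deriv_le_div_of_mapsTo_ball hg hg_maps one_pos
  rwa [hg_deriv.deriv, norm_mul, norm_div, norm_one, norm_real, Real.norm_of_nonneg hpos.le,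
    div_one, one_div_mul_eq_div, div_le_one hpos] at this

theorem sum_range_pow_of_pow_eq_one {K : Type*} [Field K] [DecidableEq K] {x : K} {N : ℕ}
    (hx : x ^ N = 1) :
    ∑ t ∈ range N, x ^ t = if x = 1 then (N : K) else 0 := by
  split_ifs with h
  · simp [h]
  · rw [geom_sum_eq h, hx, sub_self, zero_div]

theorem IsPrimitiveRoot.sum_range_pow_mul_inv_pow {K : Type*} [Field K] [DecidableEq K] {ζ : K}
    {N : ℕ} (hζ : IsPrimitiveRoot ζ N) {a b : ℕ} (ha : a < N) (hb : b < N) :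
    ∑ t ∈ range N, (ζ ^ b * (ζ ^ a)⁻¹) ^ t = if b = a then (N : K) else 0 := by
  have hpow : (ζ ^ b * (ζ ^ a)⁻¹) ^ N = 1 := by
    rw [mul_pow, inv_pow, ← pow_mul, ← pow_mul, pow_mul', pow_mul', hζ.pow_eq_one, one_pow,
      one_pow, inv_one, mul_one]
  have hne : ζ ^ a ≠ 0 := pow_ne_zero _ (hζ.ne_zero (by omega))
  rw [sum_range_pow_of_pow_eq_one hpow]
  exact if_congr ((mul_inv_eq_one₀ hne).trans ⟨fun h => hζ.pow_inj hb ha h, fun h => h ▸ rfl⟩)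
    rfl rfl

open FormalMultilinearSeries in
theorem hasFPowerSeriesOnBall_tsum_mul_pow {a : ℕ → ℂ} (ha : Summable fun k => ‖a k‖) :
    HasFPowerSeriesOnBall (fun z => ∑' k, a k * z ^ k) (ofScalars ℂ a) 0 1 := by
  have hr : 1 ≤ (ofScalars ℂ a).radius := by
    simpa using (ofScalars ℂ a).le_radius_of_summable (r := 1) (by simpa using ha)
  convert ((ofScalars ℂ a).hasFPowerSeriesOnBall (zero_lt_one.trans_le hr)).mono one_pos hr
    using 1
  ext z
  rw [← ofScalarsSum, ofScalars_sum_eq]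
  simp

/-- Roots-of-unity filter. -/
theorem sum_tsum_mul_rootOfUnity_pow {b : ℕ → ℂ} (hb : Summable fun k => ‖b k‖) {m : ℕ}
    {ζ : ℂ} (hζ : IsPrimitiveRoot ζ m) (hm : m ≠ 0) {z : ℂ} (hz : ‖z‖ ≤ 1) :
    ∑ t ∈ range m, ∑' k, b k * (ζ ^ t * z) ^ k = m * ∑' j, b (j * m) * (z ^ m) ^ j := by
  have hsum : ∀ t, Summable fun k => b k * (ζ ^ t * z) ^ k := fun t =>
    Summable.of_norm_bounded hb fun k => by
      rw [norm_mul, norm_pow, norm_mul, norm_pow, hζ.norm'_eq_one hm, one_pow, one_mul]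
      exact mul_le_of_le_one_right (norm_nonneg _) (pow_le_one₀ (norm_nonneg _) hz)
  have hfilter : ∀ k, ∑ t ∈ range m, b k * (ζ ^ t * z) ^ k =
      if m ∣ k then m * (b k * z ^ k) else 0 := fun k => by
    have hpow : (ζ ^ k) ^ m = 1 := by rw [← pow_mul, mul_comm, pow_mul, hζ.pow_eq_one, one_pow]
    calc ∑ t ∈ range m, b k * (ζ ^ t * z) ^ k = b k * z ^ k * ∑ t ∈ range m, (ζ ^ k) ^ t := by
          rw [mul_sum]
          refine sum_congr rfl fun t _ => ?_
          rw [mul_pow, ← pow_mul, ← pow_mul, mul_comm t k]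
          ring
      _ = _ := by
          simp only [sum_range_pow_of_pow_eq_one hpow, hζ.pow_eq_one_iff_dvd]
          split_ifs <;> ring
  have hmul : Function.Injective fun j => j * m := mul_left_injective₀ hm
  rw [← Summable.tsum_finsetSum fun t _ => hsum t, tsum_congr hfilter, ← tsum_mul_left,
    ← hmul.tsum_eq]
  · refine tsum_congr fun j => ?_
    rw [if_pos (dvd_mul_left m j), mul_comm j m, pow_mul]
  · intro k hk
    obtain ⟨j, rfl⟩ : m ∣ k := by_contra fun h => hk (if_neg h)
    exact ⟨j, mul_comm j m⟩

open FormalMultilinearSeries in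
/-- Wiener's inequality. -/
theorem norm_coeff_le_one_sub_norm_sq {b : ℕ → ℂ} (hb : Summable fun k => ‖b k‖)
    (hbound : ∀ z : ℂ, ‖z‖ < 1 → ‖∑' k, b k * z ^ k‖ < 1) {m : ℕ} (hm : m ≠ 0) :
    ‖b m‖ ≤ 1 - ‖b 0‖ ^ 2 := by
  set G := fun w : ℂ => ∑' j, b (j * m) * w ^ j
  have hG : HasFPowerSeriesOnBall G (ofScalars ℂ fun j => b (j * m)) 0 1 :=
    hasFPowerSeriesOnBall_tsum_mul_pow (hb.comp_injective (mul_left_injective₀ hm))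
  have hG_maps : MapsTo G (ball 0 1) (ball 0 1) := by
    intro w hw
    rw [mem_ball_zero_iff] at hw ⊢
    obtain ⟨z, rfl⟩ := IsAlgClosed.exists_pow_nat_eq w (Nat.pos_of_ne_zero hm)
    have hz : ‖z‖ < 1 := by rwa [norm_pow, pow_lt_one_iff_of_nonneg (norm_nonneg z) hm] at hw
    have hζ := isPrimitiveRoot_exp m hm
    have : ‖(m : ℂ) * G (z ^ m)‖ < m := by
      rw [← sum_tsum_mul_rootOfUnity_pow hb hζ hm hz.le]
      refine (norm_sum_le _ _).trans_lt ?_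
      calc _ < ∑ _t ∈ range m, (1 : ℝ) := sum_lt_sum_of_nonempty (nonempty_range_iff.2 hm)
            fun t _ => hbound _ (by rwa [norm_mul, norm_pow, hζ.norm'_eq_one hm, one_pow, one_mul])
        _ = m := by simp
    rwa [norm_mul, Complex.norm_natCast,
      mul_lt_iff_lt_one_right (Nat.cast_pos.2 (Nat.pos_of_ne_zero hm))] at this
  have hG_diff := hG.differentiableOn
  rw [← ENNReal.ofReal_one, Metric.eball_ofReal] at hG_diff
  have := norm_deriv_zero_le_one_sub_sq hG_diff hG_maps
  rwa [hG.hasFPowerSeriesAt.deriv, ← hG.coeff_zero fun _ => 0, ofScalars_apply_eq,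
    ofScalars_apply_eq, one_pow, pow_zero, smul_eq_mul, smul_eq_mul, mul_one, mul_one, one_mul,
    zero_mul] at this

theorem hasSum_sum_antidiagonalTuple {E : Type*} [AddCommMonoid E] [TopologicalSpace E]
    [ContinuousAdd E] [RegularSpace E] {n : ℕ} {f : (Fin n → ℕ) → E} {a : E} (hf : HasSum f a) :
    HasSum (fun k => ∑ β ∈ Nat.antidiagonalTuple n k, f β) a :=
  ((Nat.sigmaAntidiagonalTupleEquivTuple n).hasSum_iff.2 hf).sigma fun _ => Finset.hasSum _ _

section HomogeneousPart

variable {R : Type*} [CommSemiring R] {n : ℕ}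

def homogeneousPart (c : (Fin n → ℕ) → R) (z : Fin n → R) (k : ℕ) : R :=
  ∑ β ∈ Nat.antidiagonalTuple n k, c β * ∏ j, z j ^ β j

theorem homogeneousPart_zero (c : (Fin n → ℕ) → R) (z : Fin n → R) :
    homogeneousPart c z 0 = c 0 := by
  simp [homogeneousPart, Nat.antidiagonalTuple_zero_right]

theorem homogeneousPart_mul_left (c : (Fin n → ℕ) → R) (z : Fin n → R) (t : R) (k : ℕ) :
    homogeneousPart c (fun j => t * z j) k = homogeneousPart c z k * t ^ k := by
  rw [homogeneousPart, homogeneousPart, sum_mul]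
  refine sum_congr rfl fun β hβ => ?_
  rw [← Nat.mem_antidiagonalTuple.1 hβ, ← prod_pow_eq_pow_sum]
  simp only [mul_pow, prod_mul_distrib]
  ring

theorem homogeneousPart_mul_apply (c : (Fin n → ℕ) → R) (u z : Fin n → R) (k : ℕ) :
    homogeneousPart c (fun j => u j * z j) k =
      homogeneousPart (fun β => c β * ∏ j, z j ^ β j) u k := by
  refine sum_congr rfl fun β _ => ?_
  simp only [mul_pow, prod_mul_distrib]
  ring

theorem hasSum_homogeneousPart [TopologicalSpace R] [ContinuousAdd R] [RegularSpace R]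
    {c : (Fin n → ℕ) → R} {z : Fin n → R} {a : R} (h : HasSum (fun β => c β * ∏ j, z j ^ β j) a) :
    HasSum (homogeneousPart c z) a :=
  hasSum_sum_antidiagonalTuple h

end HomogeneousPart

theorem summable_norm_homogeneousPart {R : Type*} [NormedCommRing R] {n : ℕ}
    {c : (Fin n → ℕ) → R} {z : Fin n → R}
    (h : Summable fun β => ‖c β * ∏ j, z j ^ β j‖) :
    Summable fun k => ‖homogeneousPart c z k‖ :=
  (hasSum_sum_antidiagonalTuple h.hasSum).summable.of_nonneg_of_le (fun _ => norm_nonneg _)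
    fun _ => norm_sum_le _ _

theorem IsPrimitiveRoot.sum_piFinset_prod_inv_pow_mul_sum {K : Type*} [Field K] {ζ : K}
    {N n : ℕ} (hζ : IsPrimitiveRoot ζ N) {S : Finset (Fin n → ℕ)}
    (hS : ∀ β ∈ S, ∀ j, β j < N) (a : (Fin n → ℕ) → K) {α : Fin n → ℕ} (hα : α ∈ S) :
    ∑ v ∈ Fintype.piFinset fun _ => range N,
        (∏ j, (ζ ^ α j)⁻¹ ^ v j) * ∑ β ∈ S, a β * ∏ j, (ζ ^ v j) ^ β j =
      (N : K) ^ n * a α := by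
  classical
  calc _ = ∑ β ∈ S, a β * ∏ j, ∑ t ∈ range N, (ζ ^ β j * (ζ ^ α j)⁻¹) ^ t := by
        simp_rw [prod_univ_sum, mul_sum]
        rw [sum_comm]
        refine sum_congr rfl fun β _ => sum_congr rfl fun v _ => ?_
        simp_rw [mul_pow, prod_mul_distrib, pow_right_comm ζ (v _)]
        ring
    _ = ∑ β ∈ S, a β * if β = α then (N : K) ^ n else 0 := by
        refine sum_congr rfl fun β hβ => ?_
        simp [hζ.sum_range_pow_mul_inv_pow (hS α hα _) (hS β hβ _), prod_ite_zero, funext_iff]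
    _ = _ := by
        rw [sum_eq_single_of_mem α hα fun β _ hβ => by rw [if_neg hβ, mul_zero], if_pos rfl,
          mul_comm]

/-- Cauchy's estimate on the torus, with the torus replaced by a grid of roots of unity. -/
theorem norm_coeff_le_of_norm_le_on_torus {n : ℕ} (S : Finset (Fin n → ℕ))
    (a : (Fin n → ℕ) → ℂ) {M : ℝ}
    (hM : ∀ u : Fin n → ℂ, (∀ j, ‖u j‖ = 1) → ‖∑ β ∈ S, a β * ∏ j, u j ^ β j‖ ≤ M)
    {α : Fin n → ℕ} (hα : α ∈ S) : ‖a α‖ ≤ M := by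
  obtain ⟨N, hN, hS⟩ : ∃ N, N ≠ 0 ∧ ∀ β ∈ S, ∀ j, β j < N :=
    ⟨S.sup (fun β => univ.sup β) + 1, by omega, fun β hβ j =>
      Nat.lt_succ_of_le ((le_sup (mem_univ j)).trans (le_sup (f := fun β => univ.sup β) hβ))⟩
  have hζ := isPrimitiveRoot_exp N hN
  have hζ1 := hζ.norm'_eq_one hN
  have hle : ‖(N : ℂ) ^ n * a α‖ ≤ (N : ℝ) ^ n * M := by
    rw [← hζ.sum_piFinset_prod_inv_pow_mul_sum hS a hα]
    refine (norm_sum_le _ _).trans ?_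
    calc _ ≤ ∑ _v ∈ Fintype.piFinset (fun _ : Fin n => range N), M := sum_le_sum fun v _ => by
          simp only [norm_mul, norm_prod, norm_pow, norm_inv, hζ1, one_pow, inv_one,
            prod_const_one, one_mul]
          exact hM _ fun j => by rw [norm_pow, hζ1, one_pow]
      _ = (N : ℝ) ^ n * M := by simp [Fintype.card_piFinset]
  rw [norm_mul, norm_pow, Complex.norm_natCast] at hle
  exact le_of_mul_le_mul_left hle (by positivity)

theorem norm_homogeneousPart_le_one_sub_norm_sq {n : ℕ} {D : Set (Fin n → ℂ)}
    (hD : ∀ z ∈ D, ∀ lam : Fin n → ℂ, (∀ j, ‖lam j‖ ≤ 1) → (fun j => lam j * z j) ∈ D)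
    {c : (Fin n → ℕ) → ℂ} (hconv : ∀ z ∈ D, Summable fun β => ‖c β * ∏ j, z j ^ β j‖)
    (hbound : ∀ z ∈ D, ‖∑' β, c β * ∏ j, z j ^ β j‖ < 1) {w : Fin n → ℂ} (hw : w ∈ D)
    {m : ℕ} (hm : m ≠ 0) : ‖homogeneousPart c w m‖ ≤ 1 - ‖c 0‖ ^ 2 := by
  have hslice : ∀ t : ℂ, ‖t‖ ≤ 1 → (fun j => t * w j) ∈ D := fun t ht =>
    hD w hw (fun _ => t) fun _ => ht
  have := norm_coeff_le_one_sub_norm_sq (summable_norm_homogeneousPart (hconv w hw))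
    (fun t ht => ?_) hm
  · rwa [homogeneousPart_zero] at this
  · simp_rw [← homogeneousPart_mul_left]
    rw [(hasSum_homogeneousPart (hconv _ (hslice t ht.le)).of_norm.hasSum).tsum_eq]
    exact hbound _ (hslice t ht.le)

theorem sSup_image_norm_monomial_pos {n : ℕ} {D : Set (Fin n → ℂ)} (hDopen : IsOpen D)
    (hD0 : 0 ∈ D) (hDbdd : Bornology.IsBounded D) (α : Fin n → ℕ) :
    0 < sSup ((fun z : Fin n → ℂ => ‖∏ j, z j ^ α j‖) '' D) := by
  obtain ⟨ε, hε, hball⟩ := Metric.isOpen_iff.1 hDopen 0 hD0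
  set z₀ : Fin n → ℂ := fun _ => ((ε / 2 : ℝ) : ℂ)
  have hz₀ : z₀ ∈ D := hball <| mem_ball_zero_iff.2 <| (pi_norm_const_le _).trans_lt <| by
    rw [norm_real, Real.norm_of_nonneg (by positivity)]; linarith
  have hbdd : BddAbove ((fun z : Fin n → ℂ => ‖∏ j, z j ^ α j‖) '' D) :=
    (hDbdd.isCompact_closure.bddAbove_image (by fun_prop : Continuous _).continuousOn).mono
      (image_mono subset_closure)
  refine lt_of_lt_of_le ?_ (le_csSup hbdd (mem_image_of_mem _ hz₀))
  exact norm_pos_iff.2 <| prod_ne_zero_iff.2 fun j _ =>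
    pow_ne_zero _ (ofReal_ne_zero.2 (by positivity))

theorem le_div_sSup_image_of_forall_mul_le {ι : Type*} {s : Set ι} {g : ι → ℝ} {x M : ℝ}
    (hx : 0 ≤ x) (hM : 0 ≤ M) (hpos : 0 < sSup (g '' s)) (h : ∀ z ∈ s, x * g z ≤ M) :
    x ≤ M / sSup (g '' s) := by
  rw [le_div_iff₀ hpos, ← smul_eq_mul, ← Real.sSup_smul_of_nonneg hx]
  refine Real.sSup_le ?_ hM
  rintro _ ⟨_, ⟨z, hz, rfl⟩, rfl⟩
  exact h z hz

theorem generalized_cauchy_wiener_general (n : ℕ) (D : Set (Fin n → ℂ))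
    (hDopen : IsOpen D) (hD0 : (0 : Fin n → ℂ) ∈ D)
    (hDbdd : Bornology.IsBounded D)
    (hDcirc : ∀ z ∈ D, ∀ lam : Fin n → ℂ, (∀ j, ‖lam j‖ ≤ 1) →
      (fun j => lam j * z j) ∈ D)
    (c : (Fin n → ℕ) → ℂ)
    (hconv : ∀ z ∈ D, Summable (fun α : Fin n → ℕ => ‖c α * ∏ j, z j ^ α j‖))
    (hbound : ∀ z ∈ D, ‖∑' α : Fin n → ℕ, c α * ∏ j, z j ^ α j‖ < 1) :
    ∀ α : Fin n → ℕ, 1 ≤ ∑ j, α j →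
      ‖c α‖ ≤ (1 - ‖c 0‖ ^ 2) /
        sSup ((fun z : Fin n → ℂ => ‖∏ j, z j ^ α j‖) '' D) := by
  intro α hα
  have hm : ∑ j, α j ≠ 0 := by omega
  have hpoint : ∀ z ∈ D, ‖c α‖ * ‖∏ j, z j ^ α j‖ ≤ 1 - ‖c 0‖ ^ 2 := fun z hz => by
    rw [← norm_mul]
    refine norm_coeff_le_of_norm_le_on_torus _ (fun β => c β * ∏ j, z j ^ β j) (fun u hu => ?_)
      (Nat.mem_antidiagonalTuple.2 rfl)
    rw [← homogeneousPart, ← homogeneousPart_mul_apply]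
    exact norm_homogeneousPart_le_one_sub_norm_sq hDcirc hconv hbound
      (hDcirc z hz u fun j => (hu j).le) hm
  have hM : 0 ≤ 1 - ‖c 0‖ ^ 2 :=
    (norm_nonneg _).trans (norm_homogeneousPart_le_one_sub_norm_sq hDcirc hconv hbound hD0 hm)
  exact le_div_sSup_image_of_forall_mul_le (norm_nonneg _) hM
    (sSup_image_norm_monomial_pos hDopen hD0 hDbdd α) hpoint

/-- Wiener-type strengthening (16): `|c_α| ≤ (1 - |c₀|²) / d_α(D)` for
`|α| ≥ 1`. -/
theorem generalized_cauchy_wiener (n : ℕ) (hn : 1 ≤ n) (D : Set (Fin n → ℂ))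
    (hDopen : IsOpen D) (hD0 : (0 : Fin n → ℂ) ∈ D)
    (hDbdd : Bornology.IsBounded D)
    (hDcirc : ∀ z ∈ D, ∀ lam : Fin n → ℂ, (∀ j, ‖lam j‖ ≤ 1) →
      (fun j => lam j * z j) ∈ D)
    (c : (Fin n → ℕ) → ℂ)
    (hconv : ∀ z ∈ D, Summable (fun α : Fin n → ℕ => ‖c α * ∏ j, z j ^ α j‖))
    (hbound : ∀ z ∈ D, ‖∑' α : Fin n → ℕ, c α * ∏ j, z j ^ α j‖ < 1) :
    ∀ α : Fin n → ℕ, 1 ≤ ∑ j, α j →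
      ‖c α‖ ≤ (1 - ‖c 0‖ ^ 2) /
        sSup ((fun z : Fin n → ℂ => ‖∏ j, z j ^ α j‖) '' D) :=
  generalized_cauchy_wiener_general n D hDopen hD0 hDbdd hDcirc c hconv hbound
end
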